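/- Let X be a K3 surface over ℚ̄ with Picard number ρ(X) ≥ 2, and suppose the Grothendieck group of the triangulated subcategory S* ⊂ D^b(X) generated by spherical objects equals the Beauville–Voisin subring R(X) ⊂ CH*(X) = K(X). Then CH²(X) ≅ ℤ holds if and only if D^b(X) = S*. -/

import Mathlib

/-!
STATEMENT 16: Let X be a K3 surface over ℚ̄ with Picard number ρ(X) ≥ 2, and suppose
that the Grothendieck group of the triangulated subcategory S* ⊂ D^b(X) generated by
spherical objects equals the Beauville–Voisin subring R(X) ⊂ CH*(X) = K(X).  Then
CH²(X) ≅ ℤ holds if and only if D^b(X) = S*.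

Since K3 surfaces, Chow groups and their derived categories are not available in
Mathlib, the situation is formalized through the data actually used in the proof:
`C` is a triangulated category (D^b(X)); `Sstar` is a dense strictly full triangulated
subcategory (S*); `NS` and `CH2` are the Néron–Severi group (of rank ρ(X) ≥ 2) and the
Chow group CH²(X); `kIso : K(D^b(X)) ≅ ℤ ⊕ NS ⊕ CH²` is the identification
CH*(X) = K(X) (no tensoring with ℚ is needed for K3 surfaces); `c : CH2` is the
Beauville–Voisin class c_X, of degree 1, and R(X) = ℤ ⊕ NS ⊕ ℤ·c_X; the hypothesis
`hR` says that the image of K(S*) → K(D^b(X)) is R(X) (the theorem of [HuyJEMS], valid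
for ρ(X) ≥ 2).  `CH²(X) ≅ ℤ` means that the degree map is bijective.
-/

open CategoryTheory Limits Pretriangulated

universe v u

variable (C : Type u) [Category.{v} C] [Preadditive C] [HasZeroObject C]
  [HasShift C ℤ] [∀ n : ℤ, (shiftFunctor C n).Additive] [Pretriangulated C]

namespace Triangulated

/-- A triangulated subcategory (as in the older Mathlib's `Triangulated.Subcategory`). -/
structure Subcategory where
  P : C → Prop
  zero' : ∃ (Z : C) (_ : IsZero Z), P Z
  shift (X : C) (n : ℤ) : P X → P (X⟦n⟧)
  ext₂' (T : Triangle C) (_ : T ∈ distTriang C) : P T.obj₁ → P T.obj₃ → ObjectProperty.isoClosure P T.obj₂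

end Triangulated

/-- The subgroup of relations defining the Grothendieck group of a triangulated
category: `[B] = [A] + [C]` for every distinguished triangle `A → B → C`. -/
def K0Relations : AddSubgroup (FreeAbelianGroup C) :=
  AddSubgroup.closure {x | ∃ T : Triangle C, (T ∈ distTriang C) ∧
    x = FreeAbelianGroup.of T.obj₂ - FreeAbelianGroup.of T.obj₁ - FreeAbelianGroup.of T.obj₃}

/-- The Grothendieck group `K(D)` of a triangulated category. -/
def K0 : Type u := FreeAbelianGroup C ⧸ K0Relations C

instance : AddCommGroup (K0 C) :=
  inferInstanceAs (AddCommGroup (FreeAbelianGroup C ⧸ K0Relations C))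

/-- The class `[X]` of an object in the Grothendieck group. -/
def K0.cls (X : C) : K0 C := QuotientAddGroup.mk' (K0Relations C) (FreeAbelianGroup.of X)

/-- Relations for the Grothendieck group of a (strictly full) triangulated subcategory
`S`: distinguished triangles of `D` with all three vertices in `S`. -/
def K0SubRelations (S : Triangulated.Subcategory C) :
    AddSubgroup (FreeAbelianGroup {X : C // S.P X}) :=
  AddSubgroup.closure {x | ∃ (T : Triangle C) (_ : T ∈ distTriang C)
    (h₁ : S.P T.obj₁) (h₂ : S.P T.obj₂) (h₃ : S.P T.obj₃),
    x = FreeAbelianGroup.of ⟨T.obj₂, h₂⟩ - FreeAbelianGroup.of ⟨T.obj₁, h₁⟩ -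
      FreeAbelianGroup.of ⟨T.obj₃, h₃⟩}

/-- The Grothendieck group `K(D₀)` of a (strictly full) triangulated subcategory. -/
def K0Sub (S : Triangulated.Subcategory C) : Type u :=
  FreeAbelianGroup {X : C // S.P X} ⧸ K0SubRelations C S

instance (S : Triangulated.Subcategory C) : AddCommGroup (K0Sub C S) :=
  inferInstanceAs (AddCommGroup (FreeAbelianGroup {X : C // S.P X} ⧸ K0SubRelations C S))

/-- The natural map `K(D₀) → K(D)` on Grothendieck groups induced by the inclusion of a
triangulated subcategory. -/
def K0.ofSub (S : Triangulated.Subcategory C) : K0Sub C S →+ K0 C :=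
  QuotientAddGroup.lift _ (FreeAbelianGroup.lift fun X : {X : C // S.P X} => K0.cls C X.1)
    (by
      intro x hx
      have hle : K0SubRelations C S ≤
          (FreeAbelianGroup.lift fun X : {X : C // S.P X} => K0.cls C X.1).ker := by
        rw [K0SubRelations, AddSubgroup.closure_le]
        rintro y ⟨T, hT, h₁, h₂, h₃, rfl⟩
        simp only [SetLike.mem_coe, AddMonoidHom.mem_ker, map_sub,
          FreeAbelianGroup.lift_apply_of]
        show K0.cls C T.obj₂ - K0.cls C T.obj₁ - K0.cls C T.obj₃ = 0
        simp only [K0.cls, ← map_sub, QuotientAddGroup.mk'_apply]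
        exact (QuotientAddGroup.eq_zero_iff _).2
          (AddSubgroup.subset_closure ⟨T, hT, rfl⟩)
      exact hle hx)

/-!
Let `S` be a dense triangulated subcategory of `D`. Objects of `D` modulo stable equivalence
(`X ∼ Y` iff `X ⊞ W` and `Y ⊞ W` lie in `S` for some `W`) form an abelian group under `⊞`, with
inverse `X⟦1⟧`. A distinguished triangle `A → B → C` gives `B ∼ A ⊞ C`, so `X ↦ [X]` factors
through `K(D)` and kills the image of `K(S)`; since `X ∼ 0` iff `X ∈ S`, an object lies in `S`
iff its class lies in the image of `K(S)` (Thomason). Hence `D = S*` iff `K(S*) → K(X)` is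
onto, i.e. by hypothesis iff `CH² = ℤ·c_X`, which for a degree map with `deg c_X = 1` is
bijectivity of the degree.
-/

instance Triangulated.Subcategory.isTriangulated (S : Triangulated.Subcategory C) :
    ObjectProperty.IsTriangulated S.P where
  exists_zero := by
    obtain ⟨Z, hZ, h⟩ := S.zero'
    exact ⟨Z, hZ, h⟩
  isStableUnderShiftBy n := ⟨fun X => S.shift X n⟩
  ext₂' := S.ext₂'

namespace CategoryTheory.Limits

variable {D : Type*} [Category D] [HasZeroMorphisms D]

noncomputable def biprod.shuffle [HasBinaryBiproducts D] (A B A' B' : D) :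
    (A ⊞ B) ⊞ (A' ⊞ B') ≅ (A ⊞ A') ⊞ (B ⊞ B') where
  hom := biprod.lift
    (biprod.lift (biprod.fst ≫ biprod.fst) (biprod.snd ≫ biprod.fst))
    (biprod.lift (biprod.fst ≫ biprod.snd) (biprod.snd ≫ biprod.snd))
  inv := biprod.lift
    (biprod.lift (biprod.fst ≫ biprod.fst) (biprod.snd ≫ biprod.fst))
    (biprod.lift (biprod.fst ≫ biprod.snd) (biprod.snd ≫ biprod.snd))

noncomputable def biprod.isoPiFinTwo (f : Fin 2 → D) [HasBinaryBiproduct (f 0) (f 1)]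
    [HasProduct f] : f 0 ⊞ f 1 ≅ ∏ᶜ f where
  hom := Pi.lift (Fin.cons biprod.fst (Fin.cons biprod.snd finZeroElim))
  inv := biprod.lift (Pi.π f 0) (Pi.π f 1)
  inv_hom_id := by
    apply limit.hom_ext
    rintro ⟨j⟩
    fin_cases j <;> simp

end CategoryTheory.Limits

namespace CategoryTheory.ObjectProperty

open ZeroObject

variable {C}

section IsTriangulated

variable (P : ObjectProperty C) [P.IsTriangulated] [P.IsClosedUnderIsomorphisms]

lemma prop_biprod_of_isTriangulated {X Y : C} (hX : P X) (hY : P Y) : P (X ⊞ Y) :=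
  P.ext_of_isTriangulatedClosed₂ _ (binaryBiproductTriangle_distinguished X Y) hX hY

lemma prop_of_prop_biprod {X Y : C} (h : P (X ⊞ Y)) (hY : P Y) : P X :=
  P.ext_of_isTriangulatedClosed₃ _ (binaryBiproductTriangle_distinguished Y X) hY
    (P.prop_of_iso (biprod.braiding X Y) h)

lemma prop_biprod_obj₂_of_distTriang {T T' : Triangle C} (hT : T ∈ distTriang C)
    (hT' : T' ∈ distTriang C) (h₁ : P (T.obj₁ ⊞ T'.obj₁)) (h₃ : P (T.obj₃ ⊞ T'.obj₃)) :
    P (T.obj₂ ⊞ T'.obj₂) := by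
  have hdist : ∀ j : Fin 2, ![T, T'] j ∈ distTriang C := by
    intro j; fin_cases j <;> assumption
  refine P.prop_of_iso (biprod.isoPiFinTwo (fun j => (![T, T'] j).obj₂)).symm
    (P.ext_of_isTriangulatedClosed₂ _ (productTriangle_distinguished _ hdist) ?_ ?_)
  · exact P.prop_of_iso (biprod.isoPiFinTwo (fun j => (![T, T'] j).obj₁)) h₁
  · exact P.prop_of_iso (biprod.isoPiFinTwo (fun j => (![T, T'] j).obj₃)) h₃

end IsTriangulated

variable (P : ObjectProperty C)

class IsDense : Prop where
  exists_prop_biprod (X : C) : ∃ Y, P (X ⊞ Y)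

def StablyEquivalent (X Y : C) : Prop := ∃ W, P (X ⊞ W) ∧ P (Y ⊞ W)

variable {P}

lemma StablyEquivalent.symm {X Y : C} (h : P.StablyEquivalent X Y) : P.StablyEquivalent Y X :=
  let ⟨W, hX, hY⟩ := h
  ⟨W, hY, hX⟩

lemma StablyEquivalent.of_iso [P.IsClosedUnderIsomorphisms] [P.IsDense] {X Y : C} (e : X ≅ Y) :
    P.StablyEquivalent X Y := by
  obtain ⟨W, hW⟩ := IsDense.exists_prop_biprod (P := P) X
  exact ⟨W, hW, P.prop_of_iso (biprod.mapIso e (Iso.refl W)) hW⟩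

section IsTriangulated

variable [P.IsTriangulated] [P.IsClosedUnderIsomorphisms]

lemma StablyEquivalent.trans {X Y Z : C} (h : P.StablyEquivalent X Y)
    (h' : P.StablyEquivalent Y Z) : P.StablyEquivalent X Z := by
  obtain ⟨W, hXW, hYW⟩ := h
  obtain ⟨V, hYV, hZV⟩ := h'
  refine ⟨W ⊞ (Y ⊞ V), ?_, ?_⟩
  · exact P.prop_of_iso (biprod.associator X W (Y ⊞ V))
      (P.prop_biprod_of_isTriangulated hXW hYV)
  · exact P.prop_of_iso (biprod.shuffle Z V Y W ≪≫ biprod.mapIso (Iso.refl _)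
      (biprod.braiding V W) ≪≫ biprod.shuffle Z Y W V ≪≫ biprod.associator Z W (Y ⊞ V))
      (P.prop_biprod_of_isTriangulated hZV hYW)

lemma StablyEquivalent.biprod {X X' Y Y' : C} (hX : P.StablyEquivalent X X')
    (hY : P.StablyEquivalent Y Y') : P.StablyEquivalent (X ⊞ Y) (X' ⊞ Y') := by
  obtain ⟨W, hXW, hX'W⟩ := hX
  obtain ⟨V, hYV, hY'V⟩ := hY
  exact ⟨W ⊞ V,
    P.prop_of_iso (biprod.shuffle X Y W V).symm (P.prop_biprod_of_isTriangulated hXW hYV),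
    P.prop_of_iso (biprod.shuffle X' Y' W V).symm (P.prop_biprod_of_isTriangulated hX'W hY'V)⟩

lemma StablyEquivalent.shift {X Y : C} (h : P.StablyEquivalent X Y) (n : ℤ) :
    P.StablyEquivalent (X⟦n⟧) (Y⟦n⟧) := by
  have := preservesBinaryBiproducts_of_preservesBiproducts (shiftFunctor C n)
  obtain ⟨W, hXW, hYW⟩ := h
  exact ⟨W⟦n⟧,
    P.prop_of_iso ((shiftFunctor C n).mapBiprod X W) (P.le_shift n _ hXW),
    P.prop_of_iso ((shiftFunctor C n).mapBiprod Y W) (P.le_shift n _ hYW)⟩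

lemma stablyEquivalent_zero_iff {X : C} : P.StablyEquivalent X 0 ↔ P X := by
  refine ⟨fun ⟨W, hXW, h0W⟩ => ?_, fun hX => ?_⟩
  · exact P.prop_of_prop_biprod hXW (P.prop_of_iso (isoZeroBiprod (isZero_zero C)).symm h0W)
  · exact ⟨0, P.prop_of_iso (isoBiprodZero (isZero_zero C)) hX,
      P.prop_of_iso (isoBiprodZero (isZero_zero C)) P.prop_zero⟩

lemma StablyEquivalent.of_distTriang [P.IsDense] (T : Triangle C) (hT : T ∈ distTriang C) :
    P.StablyEquivalent T.obj₂ (T.obj₁ ⊞ T.obj₃) := by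
  obtain ⟨W₁, h₁⟩ := IsDense.exists_prop_biprod (P := P) T.obj₁
  obtain ⟨W₃, h₃⟩ := IsDense.exists_prop_biprod (P := P) T.obj₃
  exact ⟨W₁ ⊞ W₃,
    P.prop_biprod_obj₂_of_distTriang hT (binaryBiproductTriangle_distinguished W₁ W₃) h₁ h₃,
    P.prop_of_iso (biprod.shuffle T.obj₁ T.obj₃ W₁ W₃).symm
      (P.prop_biprod_of_isTriangulated h₁ h₃)⟩

variable (P) [P.IsDense]

def stablyEquivalentSetoid : Setoid C where
  r := P.StablyEquivalent
  iseqv := ⟨fun X => .of_iso (Iso.refl X), .symm, .trans⟩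

def StableGroup : Type u := _root_.Quotient P.stablyEquivalentSetoid

variable {P}

namespace StableGroup

def mk (X : C) : P.StableGroup := _root_.Quotient.mk _ X

lemma mk_eq_mk_iff {X Y : C} : (mk X : P.StableGroup) = mk Y ↔ P.StablyEquivalent X Y :=
  _root_.Quotient.eq

noncomputable instance : Add P.StableGroup :=
  ⟨_root_.Quotient.map₂ (· ⊞ ·) fun _ _ hX _ _ hY => hX.biprod hY⟩

noncomputable instance : Zero P.StableGroup := ⟨mk 0⟩

noncomputable instance : Neg P.StableGroup :=
  ⟨_root_.Quotient.map (·⟦(1 : ℤ)⟧) fun _ _ h => h.shift 1⟩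

noncomputable instance : AddCommGroup P.StableGroup where
  add_assoc x y z := by
    induction x using _root_.Quotient.ind
    induction y using _root_.Quotient.ind
    induction z using _root_.Quotient.ind
    exact _root_.Quotient.sound (.of_iso (biprod.associator _ _ _))
  zero_add x := by
    induction x using _root_.Quotient.ind
    exact _root_.Quotient.sound (.of_iso (isoZeroBiprod (isZero_zero C)).symm)
  add_zero x := by
    induction x using _root_.Quotient.ind
    exact _root_.Quotient.sound (.of_iso (isoBiprodZero (isZero_zero C)).symm)
  add_comm x y := by
    induction x using _root_.Quotient.ind
    induction y using _root_.Quotient.ind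
    exact _root_.Quotient.sound (.of_iso (biprod.braiding _ _))
  nsmul := nsmulRec
  zsmul := zsmulRec
  neg_add_cancel x := by
    induction x using _root_.Quotient.ind with | _ X => ?_
    -- `X⟦1⟧` is inverse to `X` because the rotated contractible triangle `X → 0 → X⟦1⟧` is
    -- distinguished.
    have h := StablyEquivalent.of_distTriang (P := P) _
      (rot_of_distTriang _ (contractible_distinguished X))
    exact _root_.Quotient.sound ((StablyEquivalent.of_iso (biprod.braiding _ _)).trans h.symm)

lemma mk_biprod (X Y : C) : (mk (X ⊞ Y) : P.StableGroup) = mk X + mk Y :=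
  rfl

lemma mk_eq_zero_iff {X : C} : (mk X : P.StableGroup) = 0 ↔ P X :=
  mk_eq_mk_iff.trans stablyEquivalent_zero_iff

end StableGroup

end IsTriangulated

end CategoryTheory.ObjectProperty

section GrothendieckGroup

open ObjectProperty

variable {C}

def K0.lift {A : Type*} [AddCommGroup A] (f : C → A)
    (hf : ∀ T ∈ distTriang C, f T.obj₂ = f T.obj₁ + f T.obj₃) : K0 C →+ A :=
  QuotientAddGroup.lift _ (FreeAbelianGroup.lift f) <| (AddSubgroup.closure_le _).2 <| by
    rintro _ ⟨T, hT, rfl⟩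
    simp [hf T hT]

lemma K0.lift_cls {A : Type*} [AddCommGroup A] (f : C → A)
    (hf : ∀ T ∈ distTriang C, f T.obj₂ = f T.obj₁ + f T.obj₃) (X : C) :
    K0.lift f hf (K0.cls C X) = f X :=
  (QuotientAddGroup.lift_mk _ _ _).trans (FreeAbelianGroup.lift_apply_of _ _)

def K0Sub.cls (S : Triangulated.Subcategory C) (X : {X : C // S.P X}) : K0Sub C S :=
  QuotientAddGroup.mk' _ (FreeAbelianGroup.of X)

lemma K0Sub.addMonoidHom_ext {S : Triangulated.Subcategory C} {A : Type*} [AddCommGroup A]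
    {f g : K0Sub C S →+ A} (h : ∀ X, f (K0Sub.cls S X) = g (K0Sub.cls S X)) : f = g :=
  QuotientAddGroup.addMonoidHom_ext _ (FreeAbelianGroup.lift_ext _ _ h)

lemma K0.ofSub_cls (S : Triangulated.Subcategory C) (X : {X : C // S.P X}) :
    K0.ofSub C S (K0Sub.cls S X) = K0.cls C X.1 :=
  (QuotientAddGroup.lift_mk _ _ _).trans (FreeAbelianGroup.lift_apply_of _ _)

lemma K0.ofSub_surjective {S : Triangulated.Subcategory C} (h : ∀ X, S.P X) :
    Function.Surjective (K0.ofSub C S) := by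
  let s : FreeAbelianGroup C →+ K0Sub C S := FreeAbelianGroup.lift fun X => K0Sub.cls S ⟨X, h X⟩
  have hs : (K0.ofSub C S).comp s = QuotientAddGroup.mk' _ := FreeAbelianGroup.lift_ext _ _
    fun X => (congrArg _ (FreeAbelianGroup.lift_apply_of _ _)).trans (K0.ofSub_cls S _)
  refine Function.Surjective.of_comp (g := s) ?_
  rw [← AddMonoidHom.coe_comp, hs]
  exact QuotientAddGroup.mk'_surjective _

noncomputable def K0.toStableGroup (P : ObjectProperty C) [P.IsTriangulated]
    [P.IsClosedUnderIsomorphisms] [P.IsDense] : K0 C →+ P.StableGroup :=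
  K0.lift StableGroup.mk fun T hT => by
    rw [← StableGroup.mk_biprod, StableGroup.mk_eq_mk_iff]
    exact StablyEquivalent.of_distTriang T hT

lemma K0.toStableGroup_cls (P : ObjectProperty C) [P.IsTriangulated]
    [P.IsClosedUnderIsomorphisms] [P.IsDense] (X : C) :
    K0.toStableGroup P (K0.cls C X) = StableGroup.mk X :=
  K0.lift_cls _ _ X

variable (S : Triangulated.Subcategory C) [IsClosedUnderIsomorphisms S.P] [IsDense S.P]

lemma K0.toStableGroup_comp_ofSub : (K0.toStableGroup S.P).comp (K0.ofSub C S) = 0 :=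
  K0Sub.addMonoidHom_ext fun X => by
    simpa [K0.ofSub_cls, K0.toStableGroup_cls] using StableGroup.mk_eq_zero_iff.2 X.2

/-- Thomason's classification of dense triangulated subcategories. -/
theorem K0.cls_mem_range_ofSub_iff (X : C) :
    K0.cls C X ∈ (K0.ofSub C S).range ↔ S.P X := by
  refine ⟨fun ⟨y, hy⟩ => ?_, fun hX => ⟨K0Sub.cls S ⟨X, hX⟩, K0.ofSub_cls S _⟩⟩
  rw [← StableGroup.mk_eq_zero_iff (P := S.P), ← K0.toStableGroup_cls, ← hy]
  exact DFunLike.congr_fun (K0.toStableGroup_comp_ofSub S) y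

lemma K0.ofSub_range_eq_top_iff : (K0.ofSub C S).range = ⊤ ↔ ∀ X, S.P X :=
  ⟨fun h X => (K0.cls_mem_range_ofSub_iff S X).1 (h ▸ AddSubgroup.mem_top _),
    fun h => AddMonoidHom.range_eq_top.2 (K0.ofSub_surjective h)⟩

end GrothendieckGroup

lemma AddMonoidHom.bijective_iff_zmultiples_eq_top {G : Type*} [AddCommGroup G]
    (f : G →+ ℤ) {c : G} (hc : f c = 1) :
    Function.Bijective f ↔ AddSubgroup.zmultiples c = ⊤ := by
  have hsection (n : ℤ) : f (n • c) = n := by simp [hc]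
  refine ⟨fun hf => (AddSubgroup.eq_top_iff' _).2 fun z => ⟨f z, hf.1 (hsection _)⟩,
    fun h => ⟨fun a b hab => ?_, fun n => ⟨n • c, hsection n⟩⟩⟩
  obtain ⟨m, rfl⟩ := AddSubgroup.mem_zmultiples_iff.1 (h ▸ AddSubgroup.mem_top a)
  obtain ⟨n, rfl⟩ := AddSubgroup.mem_zmultiples_iff.1 (h ▸ AddSubgroup.mem_top b)
  rw [hsection, hsection] at hab
  rw [hab]

theorem stmt16
    (Sstar : Triangulated.Subcategory C) [ObjectProperty.IsClosedUnderIsomorphisms Sstar.P]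
    -- S* is dense in D^b(X):
    (hdense : ∀ X : C, ∃ Y : C, Sstar.P (X ⊞ Y))
    (NS : Type*) [AddCommGroup NS] (CH2 : Type*) [AddCommGroup CH2]
    -- the identification CH*(X) = K(X), CH*(X) = CH⁰ ⊕ CH¹ ⊕ CH² = ℤ ⊕ NS ⊕ CH²:
    (kIso : K0 C ≃+ ℤ × NS × CH2)
    -- the Beauville–Voisin class c_X ∈ CH²(X), of degree 1:
    (c : CH2) (deg : CH2 →+ ℤ) (hc : deg c = 1)
    -- K(S*) = R(X) = ℤ ⊕ NS ⊕ ℤ·c_X  (theorem of [HuyJEMS] for ρ(X) ≥ 2):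
    (hR : ∀ x : K0 C, x ∈ (K0.ofSub C Sstar).range ↔
      (kIso x).2.2 ∈ AddSubgroup.zmultiples c) :
    -- CH²(X) ≅ ℤ  if and only if  D^b(X) = S*:
    Function.Bijective deg ↔ ∀ X : C, Sstar.P X := by
  have : ObjectProperty.IsDense Sstar.P := ⟨hdense⟩
  rw [deg.bijective_iff_zmultiples_eq_top hc, ← K0.ofSub_range_eq_top_iff Sstar,
    AddSubgroup.eq_top_iff', AddSubgroup.eq_top_iff']
  simp only [hR]
  exact ⟨fun h x => h _, fun h z => by simpa using h (kIso.symm (0, 0, z))⟩
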